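/- Separation objective sign test: let Q ⊆ ℝ^p be a nonempty finite set, Q⁺ = conv(Q) + ℝ^p_{≥0}, y* ∈ ℝ^p, and define v = min{ (y*)ᵀw − α : w ∈ ℝ^p_{≥0}, ∑_i w_i = 1, α ∈ ℝ, wᵀy ≥ α for all y ∈ Q, α = min_{y∈Q} wᵀy }. Then v ≥ 0 if and only if y* ∈ Q⁺. -/

import Mathlib

/-!
If `y*` lies outside the closed convex set `Q⁺ = conv Q + ℝ^p_{≥0}`, a hyperplane
`c ⬝ᵥ y* < u < c ⬝ᵥ s` (`s ∈ Q⁺`) separates them. As `Q⁺` is stable under adding nonnegative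
vectors, `c ≥ 0`, and normalising `c` gives a feasible weight `w` with
`w ⬝ᵥ y* < min_Q w ⬝ᵥ y`, so `v < 0`. Conversely, if `y* ∈ Q⁺`, every feasible `w ≥ 0` has
`w ⬝ᵥ y* ≥ min_Q w ⬝ᵥ y`, so `v ≥ 0`.
-/

open Pointwise Set Filter

section

variable {ι : Type*} [Fintype ι]

theorem LinearMap.apply_eq_dotProduct [DecidableEq ι] (f : (ι → ℝ) →ₗ[ℝ] ℝ) (x : ι → ℝ) :
    f x = (fun i => f (Pi.single i 1)) ⬝ᵥ x := by
  conv_lhs => rw [← Finset.univ_sum_single x, map_sum]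
  refine Finset.sum_congr rfl fun i _ => ?_
  rw [mul_comm, ← smul_eq_mul, ← map_smul, ← Pi.single_smul, smul_eq_mul, mul_one]

theorem exists_dotProduct_lt_of_notMem {S : Set (ι → ℝ)} (hconv : Convex ℝ S)
    (hclosed : IsClosed S) {x : ι → ℝ} (hx : x ∉ S) :
    ∃ (c : ι → ℝ) (u : ℝ), c ⬝ᵥ x < u ∧ ∀ s ∈ S, u < c ⬝ᵥ s := by
  classical
  obtain ⟨f, u, hfx, hfS⟩ := geometric_hahn_banach_point_closed hconv hclosed hx
  have hf := f.toLinearMap.apply_eq_dotProduct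
  exact ⟨_, u, hf x ▸ hfx, fun s hs => hf s ▸ hfS s hs⟩

theorem nonneg_of_forall_lt_dotProduct_add {c s : ι → ℝ} {u : ℝ}
    (h : ∀ r, 0 ≤ r → u < c ⬝ᵥ (s + r)) : 0 ≤ c := by
  classical
  intro i
  by_contra! hi
  have hto : Tendsto (fun t : ℝ => c ⬝ᵥ s + t * c i) atTop atBot :=
    tendsto_atBot_add_const_left _ _ (tendsto_id.atTop_mul_const_of_neg hi)
  obtain ⟨t, ht, htu⟩ := ((eventually_ge_atTop 0).and (hto.eventually_le_atBot u)).exists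
  have hlt := h (t • Pi.single i 1) (smul_nonneg ht (Pi.single_nonneg.2 zero_le_one))
  rw [dotProduct_add, dotProduct_smul, dotProduct_single_one, smul_eq_mul] at hlt
  linarith

theorem sum_pos_of_pos {c : ι → ℝ} (hc : 0 < c) : 0 < ∑ i, c i := by
  obtain ⟨hc_nonneg, i, hi⟩ := Pi.lt_def.1 hc
  exact Finset.sum_pos' (fun j _ => hc_nonneg j) ⟨i, Finset.mem_univ i, hi⟩

theorem inv_sum_smul_mem_stdSimplex {c : ι → ℝ} (hc : 0 < c) :
    (∑ i, c i)⁻¹ • c ∈ stdSimplex ℝ ι := by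
  have hsum := sum_pos_of_pos hc
  refine ⟨fun j => smul_nonneg (inv_nonneg.2 hsum.le) (hc.le j), ?_⟩
  simp only [Pi.smul_apply, smul_eq_mul, ← Finset.mul_sum]
  exact inv_mul_cancel₀ hsum.ne'

theorem exists_mem_stdSimplex_dotProduct_lt {Q : Set (ι → ℝ)} (hQ : Q.Finite)
    (hne : Q.Nonempty) {x : ι → ℝ} (hx : x ∉ convexHull ℝ Q + Ici 0) :
    ∃ w ∈ stdSimplex ℝ ι, ∀ y ∈ Q, w ⬝ᵥ x < w ⬝ᵥ y := by
  obtain ⟨c, u, hcx, hcS⟩ := exists_dotProduct_lt_of_notMem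
    ((convex_convexHull ℝ Q).add (convex_Ici 0))
    (isClosed_Ici.add_left_of_isCompact (hQ.isCompact_convexHull (𝕜 := ℝ))) hx
  have hQS : ∀ y ∈ Q, ∀ r, 0 ≤ r → y + r ∈ convexHull ℝ Q + Ici 0 :=
    fun y hy r hr => add_mem_add (subset_convexHull ℝ Q hy) hr
  have hcQ : ∀ y ∈ Q, c ⬝ᵥ x < c ⬝ᵥ y := fun y hy =>
    hcx.trans (by simpa using hcS _ (hQS y hy 0 le_rfl))
  obtain ⟨z, hz⟩ := hne
  have hc_pos : 0 < c := by
    refine lt_of_le_of_ne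
      (nonneg_of_forall_lt_dotProduct_add fun r hr => hcS _ (hQS z hz r hr)) fun hc => ?_
    subst hc
    simpa using hcQ z hz
  refine ⟨_, inv_sum_smul_mem_stdSimplex hc_pos, fun y hy => ?_⟩
  simp only [smul_dotProduct, smul_eq_mul]
  exact mul_lt_mul_of_pos_left (hcQ y hy) (inv_pos.2 (sum_pos_of_pos hc_pos))

theorem le_dotProduct_of_mem_convexHull_add_Ici {Q : Set (ι → ℝ)} {w x : ι → ℝ} {α : ℝ}
    (hw : 0 ≤ w) (hQ : ∀ y ∈ Q, α ≤ w ⬝ᵥ y) (hx : x ∈ convexHull ℝ Q + Ici 0) :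
    α ≤ w ⬝ᵥ x := by
  obtain ⟨z, hz, r, hr, rfl⟩ := hx
  have hlin : IsLinearMap ℝ (w ⬝ᵥ ·) := ⟨dotProduct_add w, fun a y => dotProduct_smul a w y⟩
  have hwz : α ≤ w ⬝ᵥ z := convexHull_min hQ (convex_halfSpace_ge hlin α) hz
  rw [dotProduct_add]
  linarith [dotProduct_nonneg_of_nonneg hw hr]

end

theorem separation_objective_sign_test
    (p : ℕ) (Q : Set (Fin p → ℝ)) (hfin : Q.Finite) (hne : Q.Nonempty)
    (ystar : Fin p → ℝ) (v : ℝ)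
    (hv : IsLeast
      {s : ℝ | ∃ (w : Fin p → ℝ) (α : ℝ), (∀ i, 0 ≤ w i) ∧ (∑ i, w i = 1) ∧
        (∀ y ∈ Q, α ≤ ∑ i, w i * y i) ∧
        IsLeast ((fun y => ∑ i, w i * y i) '' Q) α ∧
        s = (∑ i, ystar i * w i) - α} v) :
    0 ≤ v ↔ ystar ∈ convexHull ℝ Q + {r : Fin p → ℝ | ∀ i, 0 ≤ r i} := by
  obtain ⟨⟨w, α, hw, -, hα, -, rfl⟩, hv_le⟩ := hv
  constructor
  · intro hv_nonneg
    by_contra hy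
    obtain ⟨w', ⟨hw'0, hw'1⟩, hlt⟩ := exists_mem_stdSimplex_dotProduct_lt hfin hne hy
    obtain ⟨_, ⟨y₀, hy₀, rfl⟩, hmin⟩ :=
      (hfin.image fun y => ∑ i, w' i * y i).isCompact.exists_isLeast (hne.image _)
    have hle := hv_le ⟨w', _, hw'0, hw'1, fun y hy => hmin (mem_image_of_mem _ hy),
      ⟨mem_image_of_mem _ hy₀, hmin⟩, rfl⟩
    have hlt₀ : ∑ i, ystar i * w' i < ∑ i, w' i * y₀ i :=
      (dotProduct_comm ystar w').trans_lt (hlt y₀ hy₀)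
    linarith
  · intro hy
    have hα_le : α ≤ ∑ i, w i * ystar i := le_dotProduct_of_mem_convexHull_add_Ici hw hα hy
    have hcomm : ∑ i, ystar i * w i = ∑ i, w i * ystar i := dotProduct_comm ystar w
    linarith
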